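/- Let S be a finite subset of ℝ^d \ {0} partitioned into S⁺ and S⁻, and let x ∈ ℝ^d, x ≠ 0, x ∉ S. Say that w ∈ ℝ^d homogeneously separates (S⁺, S⁻) if ⟨w, s⟩ > 0 for all s ∈ S⁺ and ⟨w, s⟩ < 0 for all s ∈ S⁻. Suppose at least one homogeneous separator of (S⁺, S⁻) exists. Then the following are equivalent: (i) there exist homogeneous separators w₁ and w₂ of (S⁺, S⁻) with ⟨w₁, x⟩ > 0 and ⟨w₂, x⟩ < 0 (the label of x is ambiguous); (ii) there exists a homogeneous separator w of (S⁺, S⁻) with ⟨w, x⟩ = 0, i.e., S⁺ and S⁻ are separable by a (d−1)-dimensional linear subspace containing x. -/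

import Mathlib

/-!
Separators of `(S⁺, S⁻)` form an open convex cone. If two of them give `x` opposite signs,
the positive combination `-⟪w₂, x⟫ • w₁ + ⟪w₁, x⟫ • w₂` is a separator orthogonal to `x`.
Conversely, a separator `w` with `⟪w, x⟫ = 0` stays a separator after a small move `w ± ε • x`,
and these give `x` the signs of `±ε ‖x‖²`.
-/

open RealInnerProductSpace
open scoped Classical

/-- `w` is a homogeneous linear separator of the labeled sets `(Sp, Sm)`. -/
def IsHomSeparator {d : ℕ} (Sp Sm : Finset (EuclideanSpace ℝ (Fin d)))
    (w : EuclideanSpace ℝ (Fin d)) : Prop :=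
  (∀ s ∈ Sp, 0 < ⟪w, s⟫) ∧ (∀ s ∈ Sm, ⟪w, s⟫ < 0)

namespace IsHomSeparator

variable {d : ℕ} {Sp Sm : Finset (EuclideanSpace ℝ (Fin d))} {v w : EuclideanSpace ℝ (Fin d)}

theorem add (hv : IsHomSeparator Sp Sm v) (hw : IsHomSeparator Sp Sm w) :
    IsHomSeparator Sp Sm (v + w) :=
  ⟨fun s hs => by rw [inner_add_left]; exact add_pos (hv.1 s hs) (hw.1 s hs),
    fun s hs => by rw [inner_add_left]; exact add_neg (hv.2 s hs) (hw.2 s hs)⟩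

theorem smul (hw : IsHomSeparator Sp Sm w) {c : ℝ} (hc : 0 < c) :
    IsHomSeparator Sp Sm (c • w) :=
  ⟨fun s hs => by rw [real_inner_smul_left]; exact mul_pos hc (hw.1 s hs),
    fun s hs => by rw [real_inner_smul_left]; exact mul_neg_of_pos_of_neg hc (hw.2 s hs)⟩

theorem isOpen_setOf (Sp Sm : Finset (EuclideanSpace ℝ (Fin d))) :
    IsOpen {w | IsHomSeparator Sp Sm w} := by
  have hcont : ∀ s : EuclideanSpace ℝ (Fin d), Continuous fun w => ⟪w, s⟫ :=
    fun s => continuous_id.inner continuous_const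
  have hset : {w | IsHomSeparator Sp Sm w} =
      (⋂ s ∈ Sp, {w | 0 < ⟪w, s⟫}) ∩ ⋂ s ∈ Sm, {w | ⟪w, s⟫ < 0} := by
    ext w
    simp only [IsHomSeparator, Set.mem_ofPred_eq, Set.mem_inter_iff, Set.mem_iInter]
  rw [hset]
  exact (isOpen_biInter_finset fun s _ => isOpen_lt continuous_const (hcont s)).inter
    (isOpen_biInter_finset fun s _ => isOpen_lt (hcont s) continuous_const)

theorem exists_pos_add_smul_and_sub_smul (hw : IsHomSeparator Sp Sm w)
    (x : EuclideanSpace ℝ (Fin d)) :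
    ∃ ε : ℝ, 0 < ε ∧ IsHomSeparator Sp Sm (w + ε • x) ∧ IsHomSeparator Sp Sm (w - ε • x) := by
  have hopen : IsOpen {t : ℝ | IsHomSeparator Sp Sm (w + t • x)} :=
    (isOpen_setOf Sp Sm).preimage (continuous_const.add (continuous_id.smul continuous_const))
  obtain ⟨δ, hδ, hball⟩ := Metric.isOpen_iff.1 hopen 0 (by simpa using hw)
  have hmem : ∀ t : ℝ, |t| < δ → IsHomSeparator Sp Sm (w + t • x) := fun t ht =>
    hball (by simpa [Real.dist_eq] using ht)
  refine ⟨δ / 2, half_pos hδ, hmem _ ?_, ?_⟩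
  · rw [abs_of_pos (half_pos hδ)]; linarith
  · rw [sub_eq_add_neg, ← neg_smul]
    exact hmem _ (by rw [abs_neg, abs_of_pos (half_pos hδ)]; linarith)

end IsHomSeparator

theorem stmt_8_general (d : ℕ) (Sp Sm : Finset (EuclideanSpace ℝ (Fin d)))
    (x : EuclideanSpace ℝ (Fin d)) (hx0 : x ≠ 0) :
    (∃ w₁ w₂ : EuclideanSpace ℝ (Fin d), IsHomSeparator Sp Sm w₁ ∧ IsHomSeparator Sp Sm w₂ ∧
        0 < ⟪w₁, x⟫ ∧ ⟪w₂, x⟫ < 0) ↔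
      (∃ w : EuclideanSpace ℝ (Fin d), IsHomSeparator Sp Sm w ∧ ⟪w, x⟫ = 0) := by
  constructor
  · rintro ⟨w₁, w₂, h₁, h₂, hpos, hneg⟩
    refine ⟨(-⟪w₂, x⟫) • w₁ + ⟪w₁, x⟫ • w₂, (h₁.smul (neg_pos.2 hneg)).add (h₂.smul hpos), ?_⟩
    rw [inner_add_left, real_inner_smul_left, real_inner_smul_left]
    ring
  · rintro ⟨w, hw, hwx⟩
    obtain ⟨ε, hε, hadd, hsub⟩ := hw.exists_pos_add_smul_and_sub_smul x
    have hxx : 0 < ⟪x, x⟫ := real_inner_self_pos.2 hx0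
    refine ⟨w + ε • x, w - ε • x, hadd, hsub, ?_, ?_⟩
    · rw [inner_add_left, real_inner_smul_left, hwx, zero_add]
      exact mul_pos hε hxx
    · rw [inner_sub_left, real_inner_smul_left, hwx, zero_sub, neg_lt_zero]
      exact mul_pos hε hxx

/-- Cover's lemma: for a finite set `S ⊆ ℝ^d \ {0}` partitioned into
`S⁺, S⁻`, a point `x ∉ S`, `x ≠ 0`, and assuming a homogeneous separator exists, the label
of `x` is ambiguous (two separators giving `x` opposite labels exist) iff `S⁺` and `S⁻`
are separated by a homogeneous hyperplane containing `x`. -/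
theorem stmt_8 (d : ℕ) (S Sp Sm : Finset (EuclideanSpace ℝ (Fin d)))
    (hunion : Sp ∪ Sm = S) (hdisj : Disjoint Sp Sm)
    (h0 : (0 : EuclideanSpace ℝ (Fin d)) ∉ S)
    (x : EuclideanSpace ℝ (Fin d)) (hx0 : x ≠ 0) (hxS : x ∉ S)
    (hexists : ∃ w, IsHomSeparator Sp Sm w) :
    (∃ w₁ w₂ : EuclideanSpace ℝ (Fin d), IsHomSeparator Sp Sm w₁ ∧ IsHomSeparator Sp Sm w₂ ∧
        0 < ⟪w₁, x⟫ ∧ ⟪w₂, x⟫ < 0) ↔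
      (∃ w : EuclideanSpace ℝ (Fin d), IsHomSeparator Sp Sm w ∧ ⟪w, x⟫ = 0) :=
  stmt_8_general d Sp Sm x hx0
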